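/- Faithfulness of the translation: Γ ⊢ φ in P[⊥_w] if and only if Γ* ⊢ φ* in P[∨_p]. -/

import Mathlib

/-- Infons of P[∨_p]: atoms, ⊤, ⊥ (an ordinary atom here), conjunction,
primal implication and primal disjunction. -/
inductive Infon : Type
  | atom : ℕ → Infon
  | top : Infon
  | bot : Infon
  | and : Infon → Infon → Infon
  | imp : Infon → Infon → Infon
  | orp : Infon → Infon → Infon
deriving DecidableEq

/-- An infon lies in the language of P[⊥_w], i.e. contains no primal disjunction. -/
def OrFree : Infon → Prop
  | .and φ ψ => OrFree φ ∧ OrFree ψ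
  | .imp φ ψ => OrFree φ ∧ OrFree ψ
  | .orp _ _ => False
  | _ => True

/-- Derivability in the basic primal infon logic P (no rules for ⊥ or ∨_p). -/
inductive DerP : Set Infon → Infon → Prop
  | top (Γ : Set Infon) : DerP Γ .top
  | id (φ : Infon) : DerP {φ} φ
  | weak {Γ φ} (Δ : Set Infon) : DerP Γ φ → DerP (Γ ∪ Δ) φ
  | cut {Γ φ ψ} : DerP Γ φ → DerP (insert φ Γ) ψ → DerP Γ ψ
  | andI {Γ φ ψ} : DerP Γ φ → DerP Γ ψ → DerP Γ (.and φ ψ)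
  | andE1 {Γ φ ψ} : DerP Γ (.and φ ψ) → DerP Γ φ
  | andE2 {Γ φ ψ} : DerP Γ (.and φ ψ) → DerP Γ ψ
  | impI {Γ ψ} (φ : Infon) : DerP Γ ψ → DerP Γ (.imp φ ψ)
  | impE {Γ φ ψ} : DerP Γ φ → DerP Γ (.imp φ ψ) → DerP Γ ψ

/-- Derivability in P[⊥_w]: P plus the weak ⊥-elimination rule. -/
inductive DerW : Set Infon → Infon → Prop
  | top (Γ : Set Infon) : DerW Γ .top
  | id (φ : Infon) : DerW {φ} φ
  | weak {Γ φ} (Δ : Set Infon) : DerW Γ φ → DerW (Γ ∪ Δ) φ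
  | cut {Γ φ ψ} : DerW Γ φ → DerW (insert φ Γ) ψ → DerW Γ ψ
  | andI {Γ φ ψ} : DerW Γ φ → DerW Γ ψ → DerW Γ (.and φ ψ)
  | andE1 {Γ φ ψ} : DerW Γ (.and φ ψ) → DerW Γ φ
  | andE2 {Γ φ ψ} : DerW Γ (.and φ ψ) → DerW Γ ψ
  | impI {Γ ψ} (φ : Infon) : DerW Γ ψ → DerW Γ (.imp φ ψ)
  | impE {Γ φ ψ} : DerW Γ φ → DerW Γ (.imp φ ψ) → DerW Γ ψ
  | botEw {Γ φ ψ} : DerW Γ .bot → DerW Γ (.imp φ ψ) → DerW Γ ψ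

/-- Derivability in P[∨_p]: P plus the two introduction rules for primal disjunction
(and no elimination rule; ⊥ is an ordinary atom). -/
inductive DerO : Set Infon → Infon → Prop
  | top (Γ : Set Infon) : DerO Γ .top
  | id (φ : Infon) : DerO {φ} φ
  | weak {Γ φ} (Δ : Set Infon) : DerO Γ φ → DerO (Γ ∪ Δ) φ
  | cut {Γ φ ψ} : DerO Γ φ → DerO (insert φ Γ) ψ → DerO Γ ψ
  | andI {Γ φ ψ} : DerO Γ φ → DerO Γ ψ → DerO Γ (.and φ ψ)
  | andE1 {Γ φ ψ} : DerO Γ (.and φ ψ) → DerO Γ φ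
  | andE2 {Γ φ ψ} : DerO Γ (.and φ ψ) → DerO Γ ψ
  | impI {Γ ψ} (φ : Infon) : DerO Γ ψ → DerO Γ (.imp φ ψ)
  | impE {Γ φ ψ} : DerO Γ φ → DerO Γ (.imp φ ψ) → DerO Γ ψ
  | orI1 {Γ φ₁} (φ₂ : Infon) : DerO Γ φ₁ → DerO Γ (.orp φ₁ φ₂)
  | orI2 {Γ φ₂} (φ₁ : Infon) : DerO Γ φ₂ → DerO Γ (.orp φ₁ φ₂)

/-- The translation (·)*: primal implication φ→ψ goes to (⊥ ∨_p φ*) → ψ*,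
all other connectives are translated homomorphically. -/
def star : Infon → Infon
  | .and φ ψ => .and (star φ) (star ψ)
  | .imp φ ψ => .imp (.orp .bot (star φ)) (star ψ)
  | .orp φ ψ => .orp (star φ) (star ψ)
  | φ => φ

/-!
The embedding direction translates derivations rule by rule: →E becomes →E applied to
∨_p-introduction on the right, and weak ⊥-elimination becomes →E applied to ∨_p-introduction
on the left.

For the converse, interpret P[∨_p]-infons relative to Γ: atoms and ⊥ hold when they are
P[⊥_w]-derivable from Γ, ∧ and ∨_p are read classically, and an implication holds when it
validates modus ponens and, in case it is the translation φ* of an ∨-free φ, also φ is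
derivable from Γ. P[∨_p] is sound for this interpretation, and on translations of ∨-free
infons it coincides with P[⊥_w]-derivability from Γ: a derivable φ → ψ validates modus ponens
for (⊥ ∨_p φ*) → ψ* by →E on the right disjunct and weak ⊥-elimination on the left one.
-/

theorem DerW.of_mem {Γ : Set Infon} {φ : Infon} (h : φ ∈ Γ) : DerW Γ φ := by
  have := DerW.weak Γ (DerW.id φ)
  rwa [Set.singleton_union, Set.insert_eq_self.mpr h] at this

theorem DerW.derO_star {Γ : Set Infon} {φ : Infon} (h : DerW Γ φ) :
    DerO (star '' Γ) (star φ) := by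
  induction h with
  | top => exact DerO.top _
  | id φ => rw [Set.image_singleton]; exact DerO.id _
  | weak Δ _ ih => rw [Set.image_union]; exact DerO.weak _ ih
  | cut _ _ ih₁ ih₂ => exact DerO.cut ih₁ (by rwa [← Set.image_insert_eq])
  | andI _ _ ih₁ ih₂ => exact DerO.andI ih₁ ih₂
  | andE1 _ ih => exact DerO.andE1 ih
  | andE2 _ ih => exact DerO.andE2 ih
  | impI _ _ ih => exact DerO.impI _ ih
  | impE _ _ ih₁ ih₂ => exact DerO.impE (DerO.orI2 _ ih₁) ih₂
  | botEw _ _ ih₁ ih₂ => exact DerO.impE (DerO.orI1 _ ih₁) ih₂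

theorem Infon.star_injective : Function.Injective star := by
  intro φ ψ h
  induction φ generalizing ψ with
  | and φ₁ φ₂ ih₁ ih₂ | imp φ₁ φ₂ ih₁ ih₂ | orp φ₁ φ₂ ih₁ ih₂ =>
    cases ψ <;> simp only [_root_.star, reduceCtorEq, Infon.and.injEq, Infon.imp.injEq,
      Infon.orp.injEq, true_and] at h ⊢
    all_goals exact ⟨ih₁ h.1, ih₂ h.2⟩
  | _ => cases ψ <;> simp_all [_root_.star]

def Forces (Γ : Set Infon) : Infon → Prop
  | .atom n => DerW Γ (.atom n)
  | .top => True
  | .bot => DerW Γ .bot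
  | .and α β => Forces Γ α ∧ Forces Γ β
  | .orp α β => Forces Γ α ∨ Forces Γ β
  | .imp α β =>
      (Forces Γ α → Forces Γ β) ∧ ∀ φ, OrFree φ → star φ = .imp α β → DerW Γ φ

theorem forces_star_iff {Γ : Set Infon} {φ : Infon} (hφ : OrFree φ) :
    Forces Γ (star φ) ↔ DerW Γ φ := by
  induction φ with
  | atom => rfl
  | top => exact iff_of_true trivial (DerW.top Γ)
  | bot => rfl
  | orp => exact hφ.elim
  | and φ ψ ihφ ihψ =>
    rw [_root_.star, Forces, ihφ hφ.1, ihψ hφ.2]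
    exact ⟨fun h => h.1.andI h.2, fun h => ⟨h.andE1, h.andE2⟩⟩
  | imp φ ψ ihφ ihψ =>
    refine ⟨fun h => h.2 _ hφ rfl, fun h => ⟨?_, ?_⟩⟩
    · rintro (hbot | hφ')
      · exact (ihψ hφ.2).mpr (hbot.botEw h)
      · exact (ihψ hφ.2).mpr ((ihφ hφ.1 |>.mp hφ').impE h)
    · rintro χ - hχ
      obtain rfl : χ = .imp φ ψ := Infon.star_injective hχ
      exact h

theorem DerO.forces {Δ : Set Infon} {χ : Infon} (h : DerO Δ χ) {Γ : Set Infon}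
    (hΔ : ∀ δ ∈ Δ, Forces Γ δ) : Forces Γ χ := by
  induction h with
  | top => trivial
  | id => exact hΔ _ rfl
  | weak _ _ ih => exact ih fun δ hδ => hΔ δ (Or.inl hδ)
  | cut _ _ ih₁ ih₂ => exact ih₂ <| Set.forall_mem_insert.mpr ⟨ih₁ hΔ, hΔ⟩
  | andI _ _ ih₁ ih₂ => exact ⟨ih₁ hΔ, ih₂ hΔ⟩
  | andE1 _ ih => exact (ih hΔ).1
  | andE2 _ ih => exact (ih hΔ).2
  | impE _ _ ih₁ ih₂ => exact (ih₂ hΔ).1 (ih₁ hΔ)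
  | orI1 _ _ ih => exact Or.inl (ih hΔ)
  | orI2 _ _ ih => exact Or.inr (ih hΔ)
  | impI α _ ih =>
    refine ⟨fun _ => ih hΔ, ?_⟩
    rintro (_ | _ | _ | _ | ⟨φ, ψ⟩ | _) hφ hstar <;> cases hstar
    exact DerW.impI φ ((forces_star_iff hφ.2).mp (ih hΔ))

/-- Faithfulness of the translation: Γ ⊢ φ in P[⊥_w] iff Γ* ⊢ φ* in P[∨_p]
(for Γ, φ in the ∨-free language of P[⊥_w]). -/
theorem star_faithful (Γ : Set Infon) (φ : Infon)
    (hΓ : ∀ ψ ∈ Γ, OrFree ψ) (hφ : OrFree φ) :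
    DerW Γ φ ↔ DerO (star '' Γ) (star φ) := by
  refine ⟨DerW.derO_star, fun h => (forces_star_iff hφ).mp (h.forces ?_)⟩
  rintro _ ⟨ψ, hψ, rfl⟩
  exact (forces_star_iff (hΓ ψ hψ)).mpr (DerW.of_mem hψ)
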